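/- arXiv:2003.11390 — 2 statements merged into one kernel-verified Lean document; each statement's English description precedes it below -/
import Mathlib

section
/- Let S be a standard graded polynomial ring over a field K, and let I, J be homogeneous ideals of S. If the Hilbert polynomial of S/(I+J) is the zero polynomial, then the Hilbert polynomials of S/(I∩J) and S/(I·J) are equal; in particular, (I∩J)_i = (I·J)_i for all sufficiently large i. -/
/-!
Let `𝔪 = (X_0, …, X_n)`. The hypothesis says that `𝔪 ^ a ≤ I + J` for some `a`, hence
`𝔪 ^ a * (I ⊓ J) ≤ (I + J) * (I ⊓ J) ≤ I * J`. By Artin–Rees there is `k` with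
`𝔪 ^ (k + a) ⊓ (I ⊓ J) ≤ 𝔪 ^ a * (I ⊓ J)`, and a form of degree `i ≥ k + a` lies in `𝔪 ^ (k + a)`.
-/

open MvPolynomial

attribute [local instance] MvPolynomial.gradedAlgebra

namespace Ideal

variable {R : Type*}

theorem sup_mul_inf_le_mul [CommSemiring R] (I J : Ideal R) : (I ⊔ J) * (I ⊓ J) ≤ I * J := by
  rw [sup_mul]
  exact sup_le (mul_mono_right inf_le_right)
    ((mul_mono_right inf_le_left).trans_eq (mul_comm J I))

variable [CommRing R] [IsNoetherianRing R]

theorem exists_pow_add_inf_le_pow_mul (𝔪 N : Ideal R) :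
    ∃ k, ∀ j, 𝔪 ^ (k + j) ⊓ N ≤ 𝔪 ^ j * N := by
  obtain ⟨k, hk⟩ := 𝔪.exists_pow_inf_eq_pow_smul N
  refine ⟨k, fun j => ?_⟩
  have hkj := hk (k + j) (Nat.le_add_right k j)
  simp only [smul_eq_mul, mul_top, Nat.add_sub_cancel_left] at hkj
  rw [hkj]
  exact mul_mono_right inf_le_right

theorem exists_pow_inf_inf_le_mul_of_pow_le_sup {𝔪 I J : Ideal R} {a : ℕ}
    (h : 𝔪 ^ a ≤ I ⊔ J) : ∃ k, 𝔪 ^ k ⊓ (I ⊓ J) ≤ I * J := by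
  obtain ⟨k, hk⟩ := exists_pow_add_inf_le_pow_mul 𝔪 (I ⊓ J)
  exact ⟨k + a, (hk a).trans ((mul_mono_left h).trans (sup_mul_inf_le_mul I J))⟩

end Ideal

namespace MvPolynomial

variable {σ R : Type*} [CommSemiring R]

theorem IsHomogeneous.mem_pow_idealOfVars {F : MvPolynomial σ R} {i : ℕ}
    (hF : F.IsHomogeneous i) : F ∈ idealOfVars σ R ^ i := by
  rw [mem_pow_idealOfVars_iff]
  intro x hx
  rw [Finsupp.degree_eq_weight_one]
  exact (hF (mem_support_iff.mp hx)).ge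

theorem pow_idealOfVars_le_of_isHomogeneous_mem {I : Ideal (MvPolynomial σ R)} {a : ℕ}
    (h : ∀ F : MvPolynomial σ R, F.IsHomogeneous a → F ∈ I) : idealOfVars σ R ^ a ≤ I := by
  rw [pow_idealOfVars_eq_span, Ideal.span_le]
  rintro _ ⟨x, hx, rfl⟩
  exact h _ (isHomogeneous_monomial 1 hx)

end MvPolynomial

theorem inf_eq_mul_in_large_degrees_of_hilbertPolynomial_sum_eq_zero_general
    {K : Type*} [Field K] (n : ℕ) (I J : Ideal (MvPolynomial (Fin (n + 1)) K))
    -- the Hilbert polynomial of `S/(I+J)` is zero: in all large degrees the homogeneous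
    -- component of `I + J` is the full component
    (hHP : ∃ i₀ : ℕ, ∀ i ≥ i₀, ∀ F : MvPolynomial (Fin (n + 1)) K,
      F.IsHomogeneous i → F ∈ I + J) :
    ∃ i₀ : ℕ, ∀ i ≥ i₀, ∀ F : MvPolynomial (Fin (n + 1)) K,
      F.IsHomogeneous i → (F ∈ I ⊓ J ↔ F ∈ I * J) := by
  obtain ⟨a, ha⟩ := hHP
  have h𝔪 : idealOfVars (Fin (n + 1)) K ^ a ≤ I ⊔ J :=
    pow_idealOfVars_le_of_isHomogeneous_mem (ha a le_rfl)
  obtain ⟨k, hk⟩ := Ideal.exists_pow_inf_inf_le_mul_of_pow_le_sup h𝔪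
  refine ⟨k, fun i hi F hF => ⟨fun hIJ => hk ⟨?_, hIJ⟩, fun h => Ideal.mul_le_inf h⟩⟩
  exact Ideal.pow_le_pow_right hi hF.mem_pow_idealOfVars

/-- Let `S = K[X_0, …, X_n]` be a standard graded polynomial ring over a
field `K` and let `I, J` be homogeneous ideals of `S`. If the Hilbert polynomial of
`S/(I + J)` is the zero polynomial (equivalently, `(I + J)_i = S_i` for all large `i`),
then the Hilbert polynomials of `S/(I ⊓ J)` and `S/(I * J)` are equal; in particular
`(I ⊓ J)_i = (I * J)_i` for all sufficiently large `i`. -/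
theorem inf_eq_mul_in_large_degrees_of_hilbertPolynomial_sum_eq_zero
    {K : Type*} [Field K] (n : ℕ) (I J : Ideal (MvPolynomial (Fin (n + 1)) K))
    (hI : Ideal.IsHomogeneous (homogeneousSubmodule (Fin (n + 1)) K) I)
    (hJ : Ideal.IsHomogeneous (homogeneousSubmodule (Fin (n + 1)) K) J)
    -- the Hilbert polynomial of `S/(I+J)` is zero: in all large degrees the homogeneous
    -- component of `I + J` is the full component
    (hHP : ∃ i₀ : ℕ, ∀ i ≥ i₀, ∀ F : MvPolynomial (Fin (n + 1)) K,
      F.IsHomogeneous i → F ∈ I + J) :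
    ∃ i₀ : ℕ, ∀ i ≥ i₀, ∀ F : MvPolynomial (Fin (n + 1)) K,
      F.IsHomogeneous i → (F ∈ I ⊓ J ↔ F ∈ I * J) :=
  inf_eq_mul_in_large_degrees_of_hilbertPolynomial_sum_eq_zero_general n I J hHP
end

section
/- Let X = P_1+⋯+P_s be a set of distinct points in P^n (char K = 0) and let ν ≥ 1. Then for all sufficiently large degrees i, the degree-i components of ∂(I_X^{ν+1}), of ∂I_{(ν+1)X}, of I_{νX}, and of I_X^ν all coincide. -/
open MvPolynomial

/-- The homogeneous vanishing ideal of the `K`-rational point of `ℙ^n` with homogeneous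
coordinates `v`. -/
noncomputable def pointIdeal {K : Type*} [Field K] {n : ℕ} (v : Fin (n + 1) → K) :
    Ideal (MvPolynomial (Fin (n + 1)) K) :=
  Ideal.span {F | (∃ d, F.IsHomogeneous d) ∧ MvPolynomial.eval v F = 0}

/-- The ideal `∂I` generated by all partial derivatives of elements of `I`. -/
noncomputable def partialsIdeal {K : Type*} [Field K] {n : ℕ}
    (I : Ideal (MvPolynomial (Fin (n + 1)) K)) : Ideal (MvPolynomial (Fin (n + 1)) K) :=
  Ideal.span {g | ∃ F ∈ I, ∃ j : Fin (n + 1), g = pderiv j F}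

/-! In high degrees both `∂(I_X^(ν+1))` and `I_X^ν` contain `I_{νX}`; the remaining
inclusions hold in every degree. Since distinct points satisfy `𝔪 ⊆ P_j + P_k` (with `𝔪` the
irrelevant ideal), a prime containing every `Q_j := ∏_{k ≠ j} P_k` contains `𝔪`, so
`𝔪^e ⊆ Σ_j Q_j^(ν+2)` for some `e`. The homogeneous ideal `I_{νX}` is generated in bounded degree,
so its high-degree part lies in `𝔪^e I_{νX} ⊆ Σ_j Q_j^(ν+2) P_j^ν`. Each summand lies in
`(Q_j P_j)^ν ⊆ I_X^ν`, and in `∂((Q_j P_j)^(ν+1))`: if the linear forms `L_t` cut out `P_j`, then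
for `q ∈ Q_j^(ν+2)` and `p ∈ P_j^ν` the sum `Σ_t ∂_t(L_t q p)` equals a nonzero multiple of `q p`
modulo `(Q_j P_j)^(ν+1)`, and by Euler's formula a homogeneous ideal lies in its own `∂`. -/

attribute [local instance] MvPolynomial.gradedAlgebra

namespace Ideal

variable {R : Type*} [CommRing R]

theorem exists_pow_le_iSup_prod_erase_pow {ι : Type*} [Fintype ι] [DecidableEq ι] [Nonempty ι]
    {P : ι → Ideal R} {M : Ideal R} (hM : M.FG) (hP : ∀ j k, j ≠ k → M ≤ P j ⊔ P k) (a : ℕ) :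
    ∃ e, M ^ e ≤ ⨆ j, (∏ k ∈ Finset.univ.erase j, P k) ^ a := by
  refine exists_pow_le_of_le_radical_of_fg ?_ hM
  rw [radical_eq_sInf]
  refine le_sInf fun 𝔭 ⟨hle, h𝔭⟩ => ?_
  have hcontains : ∀ j, ∃ k ≠ j, P k ≤ 𝔭 := fun j => by
    obtain ⟨k, hk, hk𝔭⟩ := (h𝔭.prod_le).1 <| IsPrime.le_of_pow_le <| (le_iSup _ j).trans hle
    exact ⟨k, Finset.ne_of_mem_erase hk, hk𝔭⟩
  obtain ⟨k, -, hk⟩ := hcontains (Classical.arbitrary ι)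
  obtain ⟨k', hk'k, hk'⟩ := hcontains k
  exact (hP k k' hk'k.symm).trans (sup_le hk hk')

end Ideal

namespace Ideal.IsHomogeneous

variable {ι σ A : Type*} [CommSemiring A] [DecidableEq ι] [AddMonoid ι] [SetLike σ A]
  [AddSubmonoidClass σ A] {𝒜 : ι → σ} [GradedRing 𝒜]

theorem pow {I : Ideal A} (hI : I.IsHomogeneous 𝒜) (k : ℕ) : (I ^ k).IsHomogeneous 𝒜 := by
  induction k with
  | zero => simpa only [pow_zero, one_eq_top] using top 𝒜
  | succ k ih => simpa only [pow_succ] using ih.mul hI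

theorem prod {κ : Type*} {s : Finset κ} {I : κ → Ideal A}
    (hI : ∀ k ∈ s, (I k).IsHomogeneous 𝒜) :
    (∏ k ∈ s, I k).IsHomogeneous 𝒜 :=
  Finset.prod_induction _ _ (fun _ _ => mul) (one_eq_top (R := A) ▸ top 𝒜) hI

end Ideal.IsHomogeneous

namespace MvPolynomial

variable {σ R : Type*} [CommRing R]

theorem homogeneousComponent_mul_of_le {f u : MvPolynomial σ R} {d i : ℕ}
    (hu : u.IsHomogeneous d) (hdi : d ≤ i) :
    homogeneousComponent i (f * u) = homogeneousComponent (i - d) f * u := by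
  rw [← decomposition.decompose'_apply, ← decomposition.decompose'_apply]
  exact DirectSum.coe_decompose_mul_of_right_mem_of_le (homogeneousSubmodule σ R)
    ((mem_homogeneousSubmodule d u).2 hu) hdi

theorem IsHomogeneous.mem_span_X_pow {F : MvPolynomial σ R} {i e : ℕ} (hF : F.IsHomogeneous i)
    (hei : e ≤ i) : F ∈ Ideal.span (Set.range X) ^ e :=
  Ideal.pow_le_pow_right hei <|
    (Ideal.mem_span_pow_iff_exists_isHomogeneous X F).2
      ⟨map C F, hF.map C, by rw [eval_map, eval₂_eta]⟩

theorem IsHomogeneous.aeval_mul_left {σ R S : Type*} [CommSemiring R] [CommSemiring S]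
    [Algebra R S] {φ : MvPolynomial σ R} {d : ℕ} (hφ : φ.IsHomogeneous d) (a : S) (g : σ → S) :
    MvPolynomial.aeval (fun t => a * g t) φ = a ^ d * MvPolynomial.aeval g φ := by
  conv_lhs => rw [φ.as_sum]
  conv_rhs => rw [φ.as_sum]
  simp only [map_sum, Finset.mul_sum, aeval_monomial, mul_pow, Finsupp.prod_mul]
  refine Finset.sum_congr rfl fun m hm => ?_
  rw [hφ.degree_eq_sum_deg_support hm, ← Finset.prod_pow_eq_pow_sum, Finsupp.prod]
  ring

theorem sum_pderiv_X_mul {σ R : Type*} [Fintype σ] [CommRing R]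
    {g : MvPolynomial σ R} {d : ℕ} (hg : g.IsHomogeneous d) :
    ∑ t, pderiv t (X t * g) = (Fintype.card σ + d) • g := by
  simp only [Derivation.leibniz, pderiv_X_self, smul_eq_mul, one_mul, Finset.sum_add_distrib,
    mul_comm g, hg.sum_X_mul_pderiv, Finset.sum_const, Finset.card_univ, add_smul]
  exact add_comm _ _

theorem exists_mem_span_X_pow_mul_of_isHomogeneous [Finite σ] [IsNoetherianRing R]
    {I : Ideal (MvPolynomial σ R)} (hI : I.IsHomogeneous (homogeneousSubmodule σ R)) (e : ℕ) :
    ∃ i₀, ∀ i ≥ i₀, ∀ F ∈ I, F.IsHomogeneous i → F ∈ Ideal.span (Set.range X) ^ e * I := by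
  obtain ⟨G, rfl⟩ : I.FG := IsNoetherian.noetherian I
  refine ⟨G.sup totalDegree + e, fun i hi F hF hFi => ?_⟩
  obtain ⟨f, -, rfl⟩ := Submodule.mem_span_finset.1 hF
  rw [← homogeneousComponent_eq_self hFi, map_sum]
  refine sum_mem fun g hg => ?_
  rw [smul_eq_mul, ← sum_homogeneousComponent g, Finset.mul_sum, map_sum]
  refine sum_mem fun d hd => ?_
  have hdi : d + e ≤ i := by
    have := Finset.le_sup (f := totalDegree) hg
    have := Finset.mem_range.1 hd
    omega
  rw [homogeneousComponent_mul_of_le (homogeneousComponent_isHomogeneous d g) (by omega)]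
  exact Ideal.mul_mem_mul ((homogeneousComponent_isHomogeneous _ _).mem_span_X_pow (by omega))
    (homogeneousComponent_mem_of_mem hI (Ideal.subset_span hg) d)

end MvPolynomial

namespace Derivation

variable {R A : Type*} [CommRing R] [CommRing A] [Algebra R A]

theorem apply_mem_pow_of_mem_pow_succ (D : Derivation R A A) {I : Ideal A} {k : ℕ} {p : A}
    (hp : p ∈ I ^ (k + 1)) : D p ∈ I ^ k := by
  induction k generalizing p with
  | zero => simp
  | succ k ih =>
    rw [pow_succ] at hp
    refine Submodule.mul_induction_on hp (fun x hx y hy => ?_) (fun x y hx hy => ?_)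
    · rw [leibniz, smul_eq_mul, smul_eq_mul]
      exact add_mem (Ideal.mul_mem_right _ _ hx) (pow_succ' I k ▸ Ideal.mul_mem_mul hy (ih hx))
    · rw [map_add]; exact add_mem hx hy

theorem apply_sub_mul_mem_pow_two (D : Derivation R A A) {S : Set A} {a : A}
    (hS : ∀ s ∈ S, D s = a * s) (hD : ∀ x, D x ∈ Ideal.span S) {x : A}
    (hx : x ∈ Ideal.span S) : D x - a * x ∈ Ideal.span S ^ 2 := by
  induction hx using Submodule.span_induction with
  | mem s hs => simp [hS s hs]
  | zero => simp
  | add x y _ _ hx hy =>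
    simpa only [map_add, mul_add, add_sub_add_comm] using add_mem hx hy
  | smul r x hx ihx =>
    have : D (r • x) - a * (r • x) = r * (D x - a * x) + x * D r := by
      rw [smul_eq_mul, leibniz, smul_eq_mul, smul_eq_mul]; ring
    rw [this, pow_two]
    exact add_mem (Ideal.mul_mem_left _ _ (pow_two (Ideal.span S) ▸ ihx))
      (Ideal.mul_mem_mul hx (hD r))

theorem apply_sub_natCast_mul_mem_pow_succ (D : Derivation R A A) {S : Set A} {a : A}
    (hS : ∀ s ∈ S, D s = a * s) (hD : ∀ x, D x ∈ Ideal.span S) (k : ℕ) {p : A}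
    (hp : p ∈ Ideal.span S ^ k) : D p - k * a * p ∈ Ideal.span S ^ (k + 1) := by
  induction k generalizing p with
  | zero => simpa using hD p
  | succ k ih =>
    rw [pow_succ] at hp
    refine Submodule.mul_induction_on hp (fun x hx y hy => ?_) (fun x y hx hy => ?_)
    · have : D (x * y) - ↑(k + 1) * a * (x * y) = (D x - k * a * x) * y + x * (D y - a * y) := by
        rw [leibniz, smul_eq_mul, smul_eq_mul]; push_cast; ring
      rw [this]
      refine add_mem ?_ ?_
      · rw [pow_succ _ (k + 1)]
        exact Ideal.mul_mem_mul (ih hx) hy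
      · rw [show k + 1 + 1 = k + 2 from rfl, pow_add]
        exact Ideal.mul_mem_mul hx (apply_sub_mul_mem_pow_two D hS hD hy)
    · simpa only [map_add, mul_add, add_sub_add_comm] using add_mem hx hy

end Derivation

section Partials

variable {K : Type*} [Field K] {n : ℕ}

theorem partialsIdeal_mono {I J : Ideal (MvPolynomial (Fin (n + 1)) K)} (h : I ≤ J) :
    partialsIdeal I ≤ partialsIdeal J :=
  Ideal.span_mono fun _ ⟨F, hF, t, hg⟩ => ⟨F, h hF, t, hg⟩

theorem partialsIdeal_pow_succ_le (I : Ideal (MvPolynomial (Fin (n + 1)) K)) (k : ℕ) :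
    partialsIdeal (I ^ (k + 1)) ≤ I ^ k :=
  Ideal.span_le.2 fun _ ⟨_, hF, t, hg⟩ => hg ▸ (pderiv t).apply_mem_pow_of_mem_pow_succ hF

theorem le_partialsIdeal_of_isHomogeneous [CharZero K] {I : Ideal (MvPolynomial (Fin (n + 1)) K)}
    (hI : I.IsHomogeneous (homogeneousSubmodule (Fin (n + 1)) K)) : I ≤ partialsIdeal I := by
  intro F hF
  rw [← sum_homogeneousComponent F]
  refine sum_mem fun d _ => ?_
  set g := homogeneousComponent d F
  have hsum : (n + 1 + d) • g ∈ partialsIdeal I := by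
    have hEuler := sum_pderiv_X_mul (homogeneousComponent_isHomogeneous d F)
    rw [Fintype.card_fin] at hEuler
    rw [← hEuler]
    exact sum_mem fun t _ => Ideal.subset_span
      ⟨X t * g, I.mul_mem_left _ (homogeneousComponent_mem_of_mem hI hF d), t, rfl⟩
  have hm : ((n + 1 + d : ℕ) : K) ≠ 0 := Nat.cast_ne_zero.2 (by omega)
  rw [← inv_smul_smul₀ hm g, Nat.cast_smul_eq_nsmul]
  exact Submodule.smul_of_tower_mem _ _ hsum

end Partials

section Points

variable {K : Type*} [Field K] {n : ℕ}

noncomputable def pointLinForm (v : Fin (n + 1) → K) (t₀ t : Fin (n + 1)) :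
    MvPolynomial (Fin (n + 1)) K :=
  C (v t₀) * X t - C (v t) * X t₀

theorem isHomogeneous_pointLinForm (v : Fin (n + 1) → K) (t₀ t : Fin (n + 1)) :
    (pointLinForm v t₀ t).IsHomogeneous 1 :=
  ((isHomogeneous_X K t).C_mul _).sub ((isHomogeneous_X K t₀).C_mul _)

theorem pointLinForm_mem_pointIdeal (v : Fin (n + 1) → K) (t₀ t : Fin (n + 1)) :
    pointLinForm v t₀ t ∈ pointIdeal v :=
  Ideal.subset_span ⟨⟨1, isHomogeneous_pointLinForm v t₀ t⟩, by simp [pointLinForm]; ring⟩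

theorem pointIdeal_eq_span_pointLinForm {v : Fin (n + 1) → K} {t₀ : Fin (n + 1)}
    (hv : v t₀ ≠ 0) : pointIdeal v = Ideal.span (Set.range (pointLinForm v t₀)) := by
  set J := Ideal.span (Set.range (pointLinForm v t₀))
  refine le_antisymm (Ideal.span_le.2 ?_) (Ideal.span_le.2 ?_)
  · rintro F ⟨⟨d, hF⟩, hFv⟩
    -- `v t₀ • X t ≡ v t • X t₀` modulo `J`, so the two substitutions agree on `F` modulo `J`;
    -- by homogeneity they send `F` to `v t₀ ^ d • F` and to `F(v) • X t₀ ^ d`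
    have hsubst : Ideal.Quotient.mkₐ K J (aeval (fun t => C (v t₀) * X t) F) =
        Ideal.Quotient.mkₐ K J (aeval (fun t => X t₀ * C (v t)) F) := by
      simp only [comp_aeval_apply]
      exact congrArg (aeval · F) <| funext fun t =>
        Ideal.Quotient.eq.2 (Ideal.subset_span ⟨t, by rw [pointLinForm]; ring⟩)
    have hCv : aeval (fun t => (C (v t) : MvPolynomial (Fin (n + 1)) K)) F = C (eval v F) := by
      simpa using (comp_aeval_apply (Algebra.ofId K (MvPolynomial _ K)) (f := v) F).symm
    rw [hF.aeval_mul_left, hF.aeval_mul_left, aeval_X_left_apply, hCv, hFv, map_zero, mul_zero,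
      map_zero, Ideal.Quotient.mkₐ_eq_mk, Ideal.Quotient.eq_zero_iff_mem] at hsubst
    have hF_eq : F = C (v t₀)⁻¹ ^ d * (C (v t₀) ^ d * F) := by
      rw [← mul_assoc, ← mul_pow, ← map_mul, inv_mul_cancel₀ hv, map_one, one_pow, one_mul]
    rw [SetLike.mem_coe, hF_eq]
    exact J.mul_mem_left _ hsubst
  · exact Set.range_subset_iff.2 (pointLinForm_mem_pointIdeal v t₀)

/-- In the affine chart `X t₀ = 1` this is the Euler vector field centred at `v`; it acts on
`P^k / P^(k+1)` as multiplication by `k * v t₀`, where `P = pointIdeal v`. -/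
noncomputable def pointDerivation (v : Fin (n + 1) → K) (t₀ : Fin (n + 1)) :
    Derivation K (MvPolynomial (Fin (n + 1)) K) (MvPolynomial (Fin (n + 1)) K) :=
  ∑ t, pointLinForm v t₀ t • pderiv t

theorem pointDerivation_apply (v : Fin (n + 1) → K) (t₀ : Fin (n + 1))
    (p : MvPolynomial (Fin (n + 1)) K) :
    pointDerivation v t₀ p = ∑ t, pointLinForm v t₀ t * pderiv t p := by
  rw [pointDerivation, ← Derivation.coeFnAddMonoidHom_apply, map_sum, Finset.sum_apply]
  rfl

theorem pointDerivation_mem_pointIdeal (v : Fin (n + 1) → K) (t₀ : Fin (n + 1))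
    (p : MvPolynomial (Fin (n + 1)) K) : pointDerivation v t₀ p ∈ pointIdeal v := by
  rw [pointDerivation_apply]
  exact sum_mem fun t _ => Ideal.mul_mem_right _ _ (pointLinForm_mem_pointIdeal v t₀ t)

theorem pointDerivation_pointLinForm (v : Fin (n + 1) → K) (t₀ t : Fin (n + 1)) :
    pointDerivation v t₀ (pointLinForm v t₀ t) = C (v t₀) * pointLinForm v t₀ t := by
  simp [pointDerivation_apply, pointLinForm, pderiv_X, Pi.single_apply, mul_sub,
    Finset.sum_sub_distrib]
  ring

theorem sum_pderiv_pointLinForm_mul (v : Fin (n + 1) → K) (t₀ : Fin (n + 1))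
    (p : MvPolynomial (Fin (n + 1)) K) :
    ∑ t, pderiv t (pointLinForm v t₀ t * p) = C (n * v t₀) * p + pointDerivation v t₀ p := by
  have hdiag : ∑ t, pderiv t (pointLinForm v t₀ t) = C (n * v t₀) := by
    simp [pointLinForm, pderiv_X, Pi.single_apply, Finset.sum_sub_distrib]
    ring
  simp only [Derivation.leibniz, smul_eq_mul, Finset.sum_add_distrib, pointDerivation_apply,
    ← Finset.mul_sum, hdiag]
  ring

theorem isHomogeneous_pointIdeal (v : Fin (n + 1) → K) :
    (pointIdeal v).IsHomogeneous (homogeneousSubmodule (Fin (n + 1)) K) :=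
  Ideal.homogeneous_span _ _ fun _ ⟨⟨d, hd⟩, _⟩ => ⟨d, hd⟩

theorem span_X_le_pointIdeal_sup {w w' : Fin (n + 1) → K} (hw : w ≠ 0)
    (hw' : ∀ c : K, w' ≠ c • w) :
    Ideal.span (Set.range X) ≤ pointIdeal w ⊔ pointIdeal w' := by
  obtain ⟨t₀, ht₀⟩ := Function.ne_iff.1 hw
  obtain ⟨t₁, hδ⟩ : ∃ t₁, w t₀ * w' t₁ - w t₁ * w' t₀ ≠ 0 := by
    by_contra! h
    refine hw' (w' t₀ / w t₀) (funext fun t => ?_)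
    rw [Pi.smul_apply, smul_eq_mul, div_mul_eq_mul_div, eq_div_iff ht₀]
    linear_combination h t
  refine Ideal.span_le.2 ?_
  rintro _ ⟨t, rfl⟩
  -- `ℓ` vanishes at `w` and agrees with `X t` at `w'`
  set ℓ := C (w' t / (w t₀ * w' t₁ - w t₁ * w' t₀)) * pointLinForm w t₀ t₁
  have hℓ : X t - ℓ ∈ pointIdeal w' := by
    refine Ideal.subset_span
      ⟨⟨1, (isHomogeneous_X K t).sub ((isHomogeneous_pointLinForm _ _ _).C_mul _)⟩, ?_⟩
    simp only [ℓ, pointLinForm, map_sub, map_mul, eval_X, eval_C]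
    field_simp
    ring
  exact add_sub_cancel ℓ (X t) ▸
    Submodule.add_mem_sup (Ideal.mul_mem_left _ _ (pointLinForm_mem_pointIdeal w t₀ t₁)) hℓ

theorem pow_mul_pointIdeal_pow_le_partialsIdeal [CharZero K] {v : Fin (n + 1) → K} (hv : v ≠ 0)
    {Q : Ideal (MvPolynomial (Fin (n + 1)) K)}
    (hQ : Q.IsHomogeneous (homogeneousSubmodule (Fin (n + 1)) K)) {ν : ℕ} (hν : 1 ≤ ν) :
    Q ^ (ν + 2) * pointIdeal v ^ ν ≤ partialsIdeal ((Q * pointIdeal v) ^ (ν + 1)) := by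
  obtain ⟨t₀, ht₀⟩ := Function.ne_iff.1 hv
  set P := pointIdeal v
  set L := pointLinForm v t₀
  set θ := pointDerivation v t₀
  set D := partialsIdeal ((Q * P) ^ (ν + 1))
  have hmem {a b} (ha : a ∈ Q ^ (ν + 1)) (hb : b ∈ P ^ (ν + 1)) : a * b ∈ (Q * P) ^ (ν + 1) :=
    mul_pow Q P (ν + 1) ▸ Ideal.mul_mem_mul ha hb
  have hLmul {p} (t) (hp : p ∈ P ^ ν) : L t * p ∈ P ^ (ν + 1) :=
    pow_succ' P ν ▸ Ideal.mul_mem_mul (pointLinForm_mem_pointIdeal v t₀ t) hp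
  have hD : (Q * P) ^ (ν + 1) ≤ D :=
    le_partialsIdeal_of_isHomogeneous ((hQ.mul (isHomogeneous_pointIdeal v)).pow _)
  refine Ideal.mul_le.2 fun q hq p hp => ?_
  have hq' : q ∈ Q ^ (ν + 1) := Ideal.pow_le_pow_right (by omega) hq
  have hsum : ∑ t, pderiv t (L t * (q * p)) ∈ D := sum_mem fun t _ =>
    Ideal.subset_span ⟨_, mul_left_comm (L t) q p ▸ hmem hq' (hLmul t hp), t, rfl⟩
  have hθq : θ q * p ∈ D := by
    rw [pointDerivation_apply, Finset.sum_mul]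
    refine sum_mem fun t _ => hD ?_
    rw [mul_comm (L t), mul_assoc]
    exact hmem ((pderiv t).apply_mem_pow_of_mem_pow_succ hq) (hLmul t hp)
  have hθp : q * (θ p - (ν : MvPolynomial _ K) * C (v t₀) * p) ∈ D := by
    have hP : P = Ideal.span (Set.range L) := pointIdeal_eq_span_pointLinForm ht₀
    refine hD (hmem hq' ?_)
    rw [hP] at hp ⊢
    refine θ.apply_sub_natCast_mul_mem_pow_succ ?_
      (fun x => hP ▸ pointDerivation_mem_pointIdeal v t₀ x) ν hp
    rintro _ ⟨t, rfl⟩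
    exact pointDerivation_pointLinForm v t₀ t
  have hkey : C ((n + ν) * v t₀) * (q * p) = ∑ t, pderiv t (L t * (q * p)) - θ q * p -
      q * (θ p - (ν : MvPolynomial _ K) * C (v t₀) * p) := by
    rw [sum_pderiv_pointLinForm_mul, Derivation.leibniz, smul_eq_mul, smul_eq_mul]
    simp only [map_mul, map_add, map_natCast]
    ring
  have hc : IsUnit (C ((n + ν) * v t₀) : MvPolynomial (Fin (n + 1)) K) :=
    (Ne.isUnit (mul_ne_zero (by norm_cast; omega) ht₀)).map C
  rw [← Ideal.unit_mul_mem_iff_mem D hc, hkey]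
  exact sub_mem (sub_mem hsum hθq) hθp

end Points

theorem exists_span_X_pow_mul_iInf_pointIdeal_pow_le {K : Type*} [Field K] [CharZero K] {n s : ℕ}
    [NeZero s] {v : Fin s → (Fin (n + 1) → K)} (hv0 : ∀ j, v j ≠ 0)
    (hdist : ∀ i j, i ≠ j → ∀ c : K, v i ≠ c • v j) {ν : ℕ} (hν : 1 ≤ ν) :
    ∃ e, Ideal.span (Set.range X) ^ e * ⨅ j, pointIdeal (v j) ^ ν ≤
      partialsIdeal ((⨅ j, pointIdeal (v j)) ^ (ν + 1)) ⊓ (⨅ j, pointIdeal (v j)) ^ ν := by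
  set P := fun j => pointIdeal (v j)
  set Q := fun j => ∏ k ∈ Finset.univ.erase j, P k
  obtain ⟨e, he⟩ := Ideal.exists_pow_le_iSup_prod_erase_pow
    (Submodule.fg_span (Set.finite_range X))
    (fun j k hjk => span_X_le_pointIdeal_sup (hv0 j) (hdist k j hjk.symm)) (ν + 2)
  have hQP j : Q j * P j ≤ ⨅ j, P j :=
    (Finset.prod_erase_mul _ _ (Finset.mem_univ j)).trans_le <|
      Ideal.prod_le_inf.trans (Finset.inf_univ_eq_iInf P).le
  refine ⟨e, (Ideal.mul_mono_left he).trans ?_⟩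
  rw [Ideal.iSup_mul]
  refine iSup_le fun j => (Ideal.mul_mono_right (iInf_le _ j)).trans (le_inf ?_ ?_)
  · exact (pow_mul_pointIdeal_pow_le_partialsIdeal (hv0 j)
      (Ideal.IsHomogeneous.prod fun k _ => isHomogeneous_pointIdeal (v k)) hν).trans
      (partialsIdeal_mono (Ideal.pow_right_mono (hQP j) _))
  · calc Q j ^ (ν + 2) * P j ^ ν ≤ Q j ^ ν * P j ^ ν :=
          Ideal.mul_mono_left (Ideal.pow_le_pow_right (by omega))
      _ = (Q j * P j) ^ ν := (mul_pow _ _ _).symm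
      _ ≤ (⨅ j, P j) ^ ν := Ideal.pow_right_mono (hQP j) _

/-- Let `X = P_1 + ⋯ + P_s` be a set of distinct points in `ℙ^n`
(char K = 0) and let `ν ≥ 1`. Then for all sufficiently large degrees `i`, the degree-`i`
components of `∂(I_X^{ν+1})`, of `∂I_{(ν+1)X}`, of `I_{νX}`, and of `I_X^ν` all coincide.
Here `I_{mX} = ⋂_j I_{P_j}^m`. -/
theorem partials_powers_points_eventually_eq {K : Type*} [Field K] [CharZero K]
    (n s : ℕ) (hs : 0 < s)
    (v : Fin s → (Fin (n + 1) → K))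
    (hv0 : ∀ j, v j ≠ 0)
    (hdist : ∀ i j, i ≠ j → ∀ c : K, v i ≠ c • v j)
    (ν : ℕ) (hν : 1 ≤ ν) :
    ∃ i₀ : ℕ, ∀ i ≥ i₀, ∀ F : MvPolynomial (Fin (n + 1)) K, F.IsHomogeneous i →
      ((F ∈ partialsIdeal ((⨅ j, pointIdeal (v j)) ^ (ν + 1)) ↔
          F ∈ partialsIdeal (⨅ j, (pointIdeal (v j)) ^ (ν + 1))) ∧
       (F ∈ partialsIdeal (⨅ j, (pointIdeal (v j)) ^ (ν + 1)) ↔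
          F ∈ (⨅ j, (pointIdeal (v j)) ^ ν)) ∧
       (F ∈ (⨅ j, (pointIdeal (v j)) ^ ν) ↔
          F ∈ (⨅ j, pointIdeal (v j)) ^ ν)) := by
  have : NeZero s := ⟨hs.ne'⟩
  set P := fun j => pointIdeal (v j)
  obtain ⟨e, he⟩ := exists_span_X_pow_mul_iInf_pointIdeal_pow_le hv0 hdist hν
  obtain ⟨i₀, hi₀⟩ := exists_mem_span_X_pow_mul_of_isHomogeneous
    (Ideal.IsHomogeneous.iInf fun j => (isHomogeneous_pointIdeal (v j)).pow ν) e
  have h₁ : partialsIdeal ((⨅ j, P j) ^ (ν + 1)) ≤ partialsIdeal (⨅ j, P j ^ (ν + 1)) :=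
    partialsIdeal_mono (le_iInf fun j => Ideal.pow_right_mono (iInf_le P j) _)
  have h₂ : partialsIdeal (⨅ j, P j ^ (ν + 1)) ≤ ⨅ j, P j ^ ν :=
    le_iInf fun j => (partialsIdeal_mono (iInf_le _ j)).trans (partialsIdeal_pow_succ_le _ ν)
  have h₃ : (⨅ j, P j) ^ ν ≤ ⨅ j, P j ^ ν := le_iInf fun j => Ideal.pow_right_mono (iInf_le P j) ν
  refine ⟨i₀, fun i hi F hF => ?_⟩
  have hhigh (h : F ∈ ⨅ j, P j ^ ν) := he (hi₀ i hi F h hF)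
  exact ⟨⟨fun h => h₁ h, fun h => (hhigh (h₂ h)).1⟩, ⟨fun h => h₂ h, fun h => h₁ (hhigh h).1⟩,
    ⟨fun h => (hhigh h).2, fun h => h₃ h⟩⟩
end
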